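/- arXiv:2206.03565 — 2 statements merged into one kernel-verified Lean document; each statement's English description precedes it below -/
import Mathlib

section
/- Let q not be a root of unity and let y₁ ∈ ℂ×. Define the weight-y₁ polynomial representation of the quantum torus on ℂ[X^{±1}] by X ↦ (multiplication by X), Y ↦ y₁ϖ⁻ where ϖ⁻(X^i) = q^{−i}X^i. Then an order-two linear involution τ on ℂ[X^{±1}] satisfying τ X = X⁻¹ τ and τ Y = Y⁻¹ τ exists if and only if y₁² = q^ℓ for some integer ℓ, and when it exists it is unique up to sign. -/
/-!
Since `τ X = X⁻¹ τ`, the operator `τ` is determined by `f₀ = τ 1`, and `τ Y = Y⁻¹ τ` makes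
`f₀` an eigenvector of the diagonal operator `Y⁻¹` with eigenvalue `y₁`. As `q` is not a root of
unity the eigenvalues `y₁⁻¹ q^n` of `Y⁻¹` are pairwise distinct, so `f₀ = ε X^m` with
`y₁² = q^m`, and `τ = ε · (X^n ↦ X^(m - n))`. Then `τ² = 1` forces `ε = ±1`, and `m` is unique.
-/

noncomputable section

/-- The diagonal operator on Laurent polynomials (coefficient model `ℤ →₀ ℂ`)
multiplying the coefficient of `X^n` by `g n`. -/
def diagOp (g : ℤ → ℂ) : (ℤ →₀ ℂ) →ₗ[ℂ] (ℤ →₀ ℂ) :=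
  Finsupp.lsum ℂ fun n => (Finsupp.lsingle n).comp (LinearMap.lsmul ℂ ℂ (g n))

/-- Multiplication by `X` on `ℂ[X^{±1}]`. -/
def mulX : (ℤ →₀ ℂ) →ₗ[ℂ] (ℤ →₀ ℂ) := Finsupp.lmapDomain ℂ ℂ (fun n => n + 1)

/-- Multiplication by `X⁻¹` on `ℂ[X^{±1}]`. -/
def mulXinv : (ℤ →₀ ℂ) →ₗ[ℂ] (ℤ →₀ ℂ) := Finsupp.lmapDomain ℂ ℂ (fun n => n - 1)

/-- The operator `Y = y₁ϖ⁻`, `Y(X^n) = y₁ q^{−n} X^n`. -/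
def opY (q y₁ : ℂ) : (ℤ →₀ ℂ) →ₗ[ℂ] (ℤ →₀ ℂ) := diagOp (fun n => y₁ * q ^ (-n))

/-- The operator `Y⁻¹`, `Y⁻¹(X^n) = y₁⁻¹ q^{n} X^n`. -/
def opYinv (q y₁ : ℂ) : (ℤ →₀ ℂ) →ₗ[ℂ] (ℤ →₀ ℂ) := diagOp (fun n => y₁⁻¹ * q ^ n)

open Function

theorem zpow_injective_of_pow_ne_one {G₀ : Type*} [GroupWithZero G₀] {q : G₀} (hq0 : q ≠ 0)
    (hq : ∀ k : ℕ, 0 < k → q ^ k ≠ 1) : Injective fun n : ℤ => q ^ n := by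
  have hu : Injective fun n : ℤ => Units.mk0 q hq0 ^ n := by
    refine injective_zpow_iff_not_isOfFinOrder.mpr ?_
    rintro ⟨k, hk, hqk⟩
    exact hq k hk (by simpa using congrArg Units.val (isPeriodicPt_mul_iff_pow_eq_one _ |>.mp hqk))
  intro a b h
  exact hu (Units.ext (by simpa only [Units.val_zpow_eq_zpow_val, Units.val_mk0] using h))

lemma diagOp_single (g : ℤ → ℂ) (n : ℤ) (c : ℂ) :
    diagOp g (Finsupp.single n c) = Finsupp.single n (g n * c) := by
  simp [diagOp]

lemma diagOp_apply (g : ℤ → ℂ) (f : ℤ →₀ ℂ) (m : ℤ) : diagOp g f m = g m * f m := by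
  induction f using Finsupp.induction_linear with
  | zero => simp
  | add f₁ f₂ h₁ h₂ => simp only [map_add, Finsupp.add_apply, h₁, h₂, mul_add]
  | single n c => by_cases h : n = m <;> simp [diagOp_single, h]

lemma apply_eq_zero_of_diagOp_eq_smul {g : ℤ → ℂ} {f : ℤ →₀ ℂ} {c : ℂ}
    (h : diagOp g f = c • f) {m : ℤ} (hm : g m ≠ c) : f m = 0 := by
  have hm' := DFunLike.congr_fun h m
  rw [diagOp_apply, Finsupp.smul_apply, smul_eq_mul] at hm'
  exact (mul_eq_mul_right_iff.mp hm').resolve_left hm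

lemma exists_eq_single_of_diagOp_eq_smul {g : ℤ → ℂ} (hg : Injective g) {f : ℤ →₀ ℂ} {c : ℂ}
    (h : diagOp g f = c • f) (hf : f ≠ 0) : ∃ m, g m = c ∧ f = Finsupp.single m (f m) := by
  obtain ⟨m, hm⟩ := Finsupp.ne_iff.mp hf
  have hgm : g m = c := by
    by_contra hgm
    exact hm (apply_eq_zero_of_diagOp_eq_smul h hgm)
  refine ⟨m, hgm, Finsupp.ext fun n => ?_⟩
  rcases eq_or_ne n m with rfl | hn
  · simp
  · rw [Finsupp.single_eq_of_ne' hn.symm]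
    exact apply_eq_zero_of_diagOp_eq_smul h fun hgn => hn (hg (hgn.trans hgm.symm))

lemma mulX_single (n : ℤ) (c : ℂ) : mulX (Finsupp.single n c) = Finsupp.single (n + 1) c := by
  simp [mulX]

lemma mulXinv_single (n : ℤ) (c : ℂ) : mulXinv (Finsupp.single n c) = Finsupp.single (n - 1) c := by
  simp [mulXinv]

lemma mulXinv_injective : Injective mulXinv :=
  Finsupp.mapDomain_injective (sub_left_injective (b := 1))

lemma eq_of_comp_mulX_eq {σ τ : (ℤ →₀ ℂ) →ₗ[ℂ] (ℤ →₀ ℂ)}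
    (hσ : σ ∘ₗ mulX = mulXinv ∘ₗ σ) (hτ : τ ∘ₗ mulX = mulXinv ∘ₗ τ)
    (h : σ (Finsupp.single 0 1) = τ (Finsupp.single 0 1)) : σ = τ := by
  have hσ' (v) : σ (mulX v) = mulXinv (σ v) := LinearMap.congr_fun hσ v
  have hτ' (v) : τ (mulX v) = mulXinv (τ v) := LinearMap.congr_fun hτ v
  have hmono (n : ℤ) : σ (Finsupp.single n 1) = τ (Finsupp.single n 1) := by
    induction n using Int.induction_on with
    | zero => exact h
    | succ i ih => rw [← mulX_single, hσ', hτ', ih]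
    | pred i ih =>
      apply mulXinv_injective
      rw [← hσ', ← hτ', mulX_single, sub_add_cancel, ih]
  refine Finsupp.lhom_ext fun n c => ?_
  rw [← mul_one c, ← smul_eq_mul, ← Finsupp.smul_single, map_smul, map_smul, hmono]

def reflect (m : ℤ) : (ℤ →₀ ℂ) →ₗ[ℂ] (ℤ →₀ ℂ) := Finsupp.lmapDomain ℂ ℂ (m - ·)

lemma reflect_single (m n : ℤ) (c : ℂ) :
    reflect m (Finsupp.single n c) = Finsupp.single (m - n) c := by
  simp [reflect]

lemma reflect_comp_reflect (m : ℤ) : reflect m ∘ₗ reflect m = LinearMap.id :=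
  Finsupp.lhom_ext fun n c => by simp [reflect_single]

lemma reflect_comp_mulX (m : ℤ) : reflect m ∘ₗ mulX = mulXinv ∘ₗ reflect m :=
  Finsupp.lhom_ext fun n c => by
    simp only [LinearMap.comp_apply, mulX_single, mulXinv_single, reflect_single, sub_add_eq_sub_sub]

lemma reflect_comp_opY {q y₁ : ℂ} {m : ℤ} (hq0 : q ≠ 0) (hm : y₁ ^ 2 = q ^ m) :
    reflect m ∘ₗ opY q y₁ = opYinv q y₁ ∘ₗ reflect m := by
  have hy : y₁ ≠ 0 := by
    rintro rfl
    exact zpow_ne_zero m hq0 (by simpa using hm.symm)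
  refine Finsupp.lhom_ext fun n c => ?_
  simp only [LinearMap.comp_apply, opY, opYinv, diagOp_single, reflect_single]
  rw [sub_eq_add_neg, zpow_add₀ hq0, ← hm]
  field_simp

def IsTorusInvolution (q y₁ : ℂ) (τ : (ℤ →₀ ℂ) →ₗ[ℂ] (ℤ →₀ ℂ)) : Prop :=
  τ ∘ₗ τ = LinearMap.id ∧ τ ∘ₗ mulX = mulXinv ∘ₗ τ ∧ τ ∘ₗ opY q y₁ = opYinv q y₁ ∘ₗ τ

lemma smul_reflect_comp_self (ε : ℂ) (m : ℤ) :
    (ε • reflect m) ∘ₗ (ε • reflect m) = (ε ^ 2) • LinearMap.id := by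
  rw [LinearMap.smul_comp, LinearMap.comp_smul, reflect_comp_reflect, smul_smul, sq]

lemma isTorusInvolution_smul_reflect {q y₁ ε : ℂ} {m : ℤ} (hq0 : q ≠ 0) (hε : ε ^ 2 = 1)
    (hm : y₁ ^ 2 = q ^ m) : IsTorusInvolution q y₁ (ε • reflect m) := by
  refine ⟨by rw [smul_reflect_comp_self, hε, one_smul], ?_, ?_⟩
  · rw [LinearMap.smul_comp, LinearMap.comp_smul, reflect_comp_mulX]
  · rw [LinearMap.smul_comp, LinearMap.comp_smul, reflect_comp_opY hq0 hm]

lemma IsTorusInvolution.exists_eq_smul_reflect {q y₁ : ℂ} (hq0 : q ≠ 0)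
    (hq : ∀ k : ℕ, 0 < k → q ^ k ≠ 1) (hy : y₁ ≠ 0) {τ : (ℤ →₀ ℂ) →ₗ[ℂ] (ℤ →₀ ℂ)}
    (hτ : IsTorusInvolution q y₁ τ) :
    ∃ (ε : ℂ) (m : ℤ), ε ^ 2 = 1 ∧ y₁ ^ 2 = q ^ m ∧ τ = ε • reflect m := by
  obtain ⟨hinv, hX, hY⟩ := hτ
  set f₀ := τ (Finsupp.single 0 1)
  have hf₀ : f₀ ≠ 0 := fun h => by
    simpa [f₀, h] using (LinearMap.congr_fun hinv (Finsupp.single 0 1)).symm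
  have heig : diagOp (fun n => y₁⁻¹ * q ^ n) f₀ = y₁ • f₀ := by
    have h := LinearMap.congr_fun hY (Finsupp.single 0 1)
    simp only [LinearMap.comp_apply, opY, diagOp_single] at h
    rw [← opYinv, ← h, ← map_smul, Finsupp.smul_single]
    simp
  have hg : Injective fun n : ℤ => y₁⁻¹ * q ^ n :=
    (mul_right_injective₀ (inv_ne_zero hy)).comp (zpow_injective_of_pow_ne_one hq0 hq)
  obtain ⟨m, hm, hf₀m⟩ := exists_eq_single_of_diagOp_eq_smul hg heig hf₀
  have hτ : τ = f₀ m • reflect m := by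
    refine eq_of_comp_mulX_eq hX ?_ ?_
    · rw [LinearMap.smul_comp, LinearMap.comp_smul, reflect_comp_mulX]
    · rw [LinearMap.smul_apply, reflect_single, sub_zero, Finsupp.smul_single, smul_eq_mul,
        mul_one, ← hf₀m]
  refine ⟨f₀ m, m, ?_, ?_, hτ⟩
  · have h := DFunLike.congr_fun (LinearMap.congr_fun hinv (Finsupp.single 0 1)) 0
    rw [hτ, smul_reflect_comp_self] at h
    simpa using h
  · field_simp at hm
    exact hm.symm

/-- For `q` not a root of unity and the weight-`y₁` polynomial representation of the
quantum torus on `ℂ[X^{±1}]` (`X ↦` mult. by `X`, `Y ↦ y₁ϖ⁻`), an order-two linear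
involution `τ` with `τX = X⁻¹τ` and `τY = Y⁻¹τ` exists iff `y₁² = q^ℓ` for some
integer `ℓ`, and is then unique up to sign. -/
theorem stmt8 (q y₁ : ℂ) (hq0 : q ≠ 0) (hq : ∀ k : ℕ, 0 < k → q ^ k ≠ 1) (hy : y₁ ≠ 0) :
    ((∃ τ : (ℤ →₀ ℂ) →ₗ[ℂ] (ℤ →₀ ℂ),
        τ ∘ₗ τ = LinearMap.id ∧ τ ∘ₗ mulX = mulXinv ∘ₗ τ ∧
          τ ∘ₗ opY q y₁ = opYinv q y₁ ∘ₗ τ) ↔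
      ∃ ℓ : ℤ, y₁ ^ 2 = q ^ ℓ) ∧
    (∀ τ τ' : (ℤ →₀ ℂ) →ₗ[ℂ] (ℤ →₀ ℂ),
      (τ ∘ₗ τ = LinearMap.id ∧ τ ∘ₗ mulX = mulXinv ∘ₗ τ ∧
        τ ∘ₗ opY q y₁ = opYinv q y₁ ∘ₗ τ) →
      (τ' ∘ₗ τ' = LinearMap.id ∧ τ' ∘ₗ mulX = mulXinv ∘ₗ τ' ∧
        τ' ∘ₗ opY q y₁ = opYinv q y₁ ∘ₗ τ') →
      τ' = τ ∨ τ' = -τ) := by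
  refine ⟨⟨fun ⟨τ, hτ⟩ => ?_, fun ⟨ℓ, hℓ⟩ => ?_⟩, fun τ τ' hτ hτ' => ?_⟩
  · obtain ⟨-, m, -, hm, -⟩ := IsTorusInvolution.exists_eq_smul_reflect hq0 hq hy hτ
    exact ⟨m, hm⟩
  · exact ⟨1 • reflect ℓ, isTorusInvolution_smul_reflect hq0 (one_pow 2) hℓ⟩
  · obtain ⟨ε, m, hε, hm, rfl⟩ := IsTorusInvolution.exists_eq_smul_reflect hq0 hq hy hτ
    obtain ⟨ε', m', hε', hm', rfl⟩ := IsTorusInvolution.exists_eq_smul_reflect hq0 hq hy hτ'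
    obtain rfl : m = m' := zpow_injective_of_pow_ne_one hq0 hq (hm.symm.trans hm')
    rcases sq_eq_sq_iff_eq_or_eq_neg.mp (hε'.trans hε.symm) with rfl | rfl
    · exact Or.inl rfl
    · exact Or.inr (neg_smul ε (reflect m))
end
end

section
/- Let D = ((tX − t⁻¹X⁻¹)/(X − X⁻¹))·ϖ + ((t⁻¹X − tX⁻¹)/(X − X⁻¹))·ϖ⁻¹ be the A₁ Macdonald difference operator, where ϖ(f)(X) = f(qX). Then D maps symmetric Laurent polynomials to symmetric Laurent polynomials, and at t = q diagonalizes Sⱼ(X) = (X^{j+1} − X^{−j−1})/(X − X⁻¹) with eigenvalue q^{j+1} + q^{−j−1}. -/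
/-!
Since `f` is symmetric, `(X − X⁻¹)·D f = ∑ⱼ cⱼ (X^{j+1} − X^{−j−1})` with
`cⱼ = (t qʲ + t⁻¹ q⁻ʲ) fⱼ`, and each `X^{j+1} − X^{−j−1}` is `X − X⁻¹` times the symmetric
Laurent polynomial `Sⱼ` (extended to all `j ∈ ℤ`); hence `D f = ∑ⱼ cⱼ Sⱼ`.
For the eigenvalue equation, `(X − X⁻¹) Sⱼ = X^{j+1} − X^{−j−1}` has only the two monomials
`X^{±(j+1)}`, and at `t = q` the operator acts on the coefficient of `Xⁿ` by `qⁿ + q⁻ⁿ`.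
-/

noncomputable section

/-- Coefficients of the type-A₁ Macdonald polynomial at `t = q`, i.e. of
`Sⱼ(X) = (X^{j+1} − X^{−j−1})/(X − X⁻¹) = X^j + X^{j-2} + ⋯ + X^{−j}`, as an element
of `ℤ →₀ ℂ` (coefficient of `X^n` at `n`). -/
def SjF (j : ℕ) : ℤ →₀ ℂ :=
  ∑ i ∈ Finset.range (j + 1), Finsupp.single ((j : ℤ) - 2 * i) (1 : ℂ)

theorem SjF_apply (j : ℕ) (m : ℤ) :
    SjF j m = if m.natAbs ≤ j ∧ Even ((j : ℤ) - m) then 1 else 0 := by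
  simp only [SjF, Finsupp.finsetSum_apply, Finsupp.single_apply]
  split_ifs with h
  · obtain ⟨hm, k, hk⟩ := h
    rw [Finset.sum_eq_single_of_mem k.toNat (Finset.mem_range.2 (by omega))
      fun i _ hi => if_neg (by omega)]
    exact if_pos (by omega)
  · exact Finset.sum_eq_zero fun i hi =>
      if_neg fun he => h ⟨by have := Finset.mem_range.1 hi; omega, i, by omega⟩

theorem SjF_neg (j : ℕ) (m : ℤ) : SjF j (-m) = SjF j m := by
  simp only [SjF_apply, Int.natAbs_neg, Int.even_sub, even_neg]

theorem SjF_sub_one_sub_SjF_add_one (j : ℕ) (n : ℤ) :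
    SjF j (n - 1) - SjF j (n + 1)
      = (if (j : ℤ) = n - 1 then 1 else 0) - (if (j : ℤ) = -n - 1 then 1 else 0) := by
  simp only [SjF_apply, Int.even_iff]
  split_ifs <;> first | rfl | omega | norm_num

/-- `(X^{j+1} − X^{−j−1})/(X − X⁻¹)` for every integer `j`: `S₋₁ = 0` and `S₋ⱼ₋₂ = −Sⱼ`. -/
def SjInt : ℤ → ℤ →₀ ℂ
  | (j : ℕ) => SjF j
  | .negSucc 0 => 0
  | .negSucc (k + 1) => -SjF k

theorem SjInt_neg (j n : ℤ) : SjInt j (-n) = SjInt j n := by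
  match j with
  | (j : ℕ) => exact SjF_neg j n
  | .negSucc 0 => rfl
  | .negSucc (k + 1) => simp only [SjInt, Finsupp.neg_apply, SjF_neg]

theorem SjInt_sub_one_sub_SjInt_add_one (j n : ℤ) :
    SjInt j (n - 1) - SjInt j (n + 1)
      = (if j = n - 1 then 1 else 0) - (if j = -n - 1 then 1 else 0) := by
  match j with
  | (j : ℕ) => exact SjF_sub_one_sub_SjF_add_one j n
  | .negSucc 0 =>
    simp only [SjInt, Finsupp.coe_zero, Pi.zero_apply, sub_self, Int.negSucc_eq]
    split_ifs <;> first | rfl | omega | norm_num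
  | .negSucc (k + 1) =>
    rw [SjInt, Finsupp.neg_apply, Finsupp.neg_apply, neg_sub_neg, ← neg_sub,
      SjF_sub_one_sub_SjF_add_one, Int.negSucc_eq]
    split_ifs <;> first | rfl | omega | norm_num

theorem exists_symm_sub_one_sub_add_one_eq (c : ℤ →₀ ℂ) :
    ∃ g : ℤ →₀ ℂ, (∀ n, g (-n) = g n) ∧
      ∀ n, g (n - 1) - g (n + 1) = c (n - 1) - c (-n - 1) := by
  refine ⟨c.sum fun j a => a • SjInt j, fun n => ?_, fun n => ?_⟩
  · simp only [Finsupp.sum_apply, Finsupp.smul_apply, SjInt_neg]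
  · rw [Finsupp.sum_apply, Finsupp.sum_apply, ← Finsupp.sum_sub]
    simp_rw [Finsupp.smul_apply, smul_eq_mul, ← mul_sub, SjInt_sub_one_sub_SjInt_add_one,
      mul_sub, mul_ite, mul_one, mul_zero]
    rw [Finsupp.sum_sub, Finsupp.sum_ite_self_eq', Finsupp.sum_ite_self_eq']

theorem zpow_add_zpow_neg_mul_SjF_sub_one_sub_SjF_add_one (q : ℂ) (j : ℕ) (n : ℤ) :
    (q ^ n + q ^ (-n)) * (SjF j (n - 1) - SjF j (n + 1))
      = (q ^ ((j : ℤ) + 1) + q ^ (-((j : ℤ) + 1))) * (SjF j (n - 1) - SjF j (n + 1)) := by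
  rw [SjF_sub_one_sub_SjF_add_one]
  split_ifs with h₁ h₂ h₂
  · omega
  · rw [show n = j + 1 by omega]
  · rw [show n = -(j + 1) by omega, neg_neg, add_comm]
  · simp

theorem stmt10_general (q t : ℂ) (hq : q ≠ 0) :
    (∀ f : ℤ →₀ ℂ, (∀ n : ℤ, f (-n) = f n) →
      ∃ g : ℤ →₀ ℂ, (∀ n : ℤ, g (-n) = g n) ∧
        ∀ n : ℤ, g (n - 1) - g (n + 1)
          = t * q ^ (n - 1) * f (n - 1) - t⁻¹ * q ^ (n + 1) * f (n + 1)
            + t⁻¹ * q ^ (-(n - 1)) * f (n - 1) - t * q ^ (-(n + 1)) * f (n + 1)) ∧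
    (∀ j : ℕ, ∀ n : ℤ,
      ((q ^ ((j : ℤ) + 1) + q ^ (-((j : ℤ) + 1))) • SjF j) (n - 1)
          - ((q ^ ((j : ℤ) + 1) + q ^ (-((j : ℤ) + 1))) • SjF j) (n + 1)
        = q * q ^ (n - 1) * SjF j (n - 1) - q⁻¹ * q ^ (n + 1) * SjF j (n + 1)
          + q⁻¹ * q ^ (-(n - 1)) * SjF j (n - 1) - q * q ^ (-(n + 1)) * SjF j (n + 1)) := by
  refine ⟨fun f hf => ?_, fun j n => ?_⟩
  · have hc : (Function.support fun m => (t * q ^ m + t⁻¹ * q ^ (-m)) * f m).Finite :=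
      f.hasFiniteSupport.subset (Function.support_mul_subset_right _ _)
    obtain ⟨g, hg_symm, hg⟩ := exists_symm_sub_one_sub_add_one_eq (Finsupp.ofSupportFinite _ hc)
    refine ⟨g, hg_symm, fun n => ?_⟩
    rw [hg, Finsupp.ofSupportFinite_coe, show -n - 1 = -(n + 1) by ring, hf, neg_neg]
    ring
  · rw [Finsupp.smul_apply, Finsupp.smul_apply, smul_eq_mul, smul_eq_mul, ← mul_sub,
      ← zpow_add_zpow_neg_mul_SjF_sub_one_sub_SjF_add_one, show -(n - 1) = -n + 1 by ring,
      show -(n + 1) = -n - 1 by ring, zpow_sub_one₀ hq, zpow_add_one₀ hq, zpow_sub_one₀ hq,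
      zpow_add_one₀ hq]
    field_simp
    ring

/-- The A₁ Macdonald difference operator
`D = ((tX − t⁻¹X⁻¹)/(X − X⁻¹))ϖ + ((t⁻¹X − tX⁻¹)/(X − X⁻¹))ϖ⁻¹` preserves symmetric
Laurent polynomials, and at `t = q` it diagonalizes `Sⱼ` with eigenvalue
`q^{j+1} + q^{−j−1}`.  Laurent polynomials are encoded as coefficient functions
`f : ℤ →₀ ℂ` (symmetric ⇔ `f(−n) = f(n)`); `D f = g` is encoded by the coefficientwise
identity `(X − X⁻¹)·g = (tX − t⁻¹X⁻¹)·f(qX) + (t⁻¹X − tX⁻¹)·f(q⁻¹X)`. -/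
theorem stmt10 (q t : ℂ) (hq : q ≠ 0) (ht : t ≠ 0) :
    (∀ f : ℤ →₀ ℂ, (∀ n : ℤ, f (-n) = f n) →
      ∃ g : ℤ →₀ ℂ, (∀ n : ℤ, g (-n) = g n) ∧
        ∀ n : ℤ, g (n - 1) - g (n + 1)
          = t * q ^ (n - 1) * f (n - 1) - t⁻¹ * q ^ (n + 1) * f (n + 1)
            + t⁻¹ * q ^ (-(n - 1)) * f (n - 1) - t * q ^ (-(n + 1)) * f (n + 1)) ∧
    (∀ j : ℕ, ∀ n : ℤ,
      ((q ^ ((j : ℤ) + 1) + q ^ (-((j : ℤ) + 1))) • SjF j) (n - 1)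
          - ((q ^ ((j : ℤ) + 1) + q ^ (-((j : ℤ) + 1))) • SjF j) (n + 1)
        = q * q ^ (n - 1) * SjF j (n - 1) - q⁻¹ * q ^ (n + 1) * SjF j (n + 1)
          + q⁻¹ * q ^ (-(n - 1)) * SjF j (n - 1) - q * q ^ (-(n + 1)) * SjF j (n + 1)) :=
  stmt10_general q t hq
end
end
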